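/- arXiv:2004.14063 — 2 statements merged into one kernel-verified Lean document; each statement's English description precedes it below -/
import Mathlib

section
/- Suppose L is additionally a Noether lattice which is local (has a unique maximal element) and a domain (for all a, b ∈ L, a·b = 0 implies a = 0 or b = 0), and let δ be an expansion function on L. Then a proper element p ∈ L is φ_n-δ-primary for every integer n ≥ 2 if and only if p is δ-primary. -/
open CompleteLattice

/-- The compact-element notion of the older Mathlib (Dec 2024), restored verbatim. -/
def CompleteLattice.IsCompactElement {α : Type*} [CompleteLattice α] (k : α) : Prop :=
  ∀ s : Set α, k ≤ sSup s → ∃ t : Finset α, ↑t ⊆ s ∧ k ≤ t.sup id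

variable {L : Type*} [CompleteLattice L] [CommMonoid L]

/-- `L` is a compactly generated multiplicative lattice: multiplication distributes over
arbitrary joins, the top element is the multiplicative identity, `1` is a compact element,
every element is a join of compact elements, and products of compact elements are compact. -/
def IsCGMultLattice (L : Type*) [CompleteLattice L] [CommMonoid L] : Prop :=
  (∀ (a : L) (S : Set L), a * sSup S = ⨆ b ∈ S, a * b) ∧
  ((1 : L) = ⊤) ∧
  CompleteLattice.IsCompactElement (1 : L) ∧
  (∀ a : L, a = sSup {x : L | CompleteLattice.IsCompactElement x ∧ x ≤ a}) ∧
  (∀ x y : L, CompleteLattice.IsCompactElement x → CompleteLattice.IsCompactElement y →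
    CompleteLattice.IsCompactElement (x * y))

/-- An expansion function on `L`: `a ≤ δ a` and `δ` is monotone. -/
def IsExpansion (δ : L → L) : Prop :=
  (∀ a : L, a ≤ δ a) ∧ ∀ a b : L, a ≤ b → δ a ≤ δ b

/-- A proper element `p` is `φ`-`δ`-primary if `a*b ≤ p` and `a*b ≰ φ p` imply
`a ≤ p` or `b ≤ δ p`. -/
def IsPhiDeltaPrimary (φ δ : L → L) (p : L) : Prop :=
  p < 1 ∧ ∀ a b : L, a * b ≤ p → ¬ a * b ≤ φ p → a ≤ p ∨ b ≤ δ p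

/-- A proper element `p` is `δ`-primary if `a*b ≤ p` implies `a ≤ p` or `b ≤ δ p`. -/
def IsDeltaPrimary (δ : L → L) (p : L) : Prop :=
  p < 1 ∧ ∀ a b : L, a * b ≤ p → a ≤ p ∨ b ≤ δ p

/-- A proper element `p` is `φ`-prime if `a*b ≤ p` and `a*b ≰ φ p` imply
`a ≤ p` or `b ≤ p`. -/
def IsPhiPrime (φ : L → L) (p : L) : Prop :=
  p < 1 ∧ ∀ a b : L, a * b ≤ p → ¬ a * b ≤ φ p → a ≤ p ∨ b ≤ p

/-- The residual `(a : b)`, the join of all `x` with `x * b ≤ a`. -/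
def lres (a b : L) : L := sSup {x : L | x * b ≤ a}

/-- The radical `√a`, the join of all compact `x` with `x ^ n ≤ a` for some `n ≥ 1`. -/
def lradical (a : L) : L :=
  sSup {x : L | CompleteLattice.IsCompactElement x ∧ ∃ n : ℕ, 0 < n ∧ x ^ n ≤ a}

/-- A principal element of a multiplicative lattice. -/
def IsPrincipalElem (e : L) : Prop :=
  ∀ a b : L, a ⊓ b * e = (lres a e ⊓ b) * e ∧ lres (a * e ⊔ b) e = lres b e ⊔ a

/-- A Noether lattice: modular, principally generated, satisfying the ascending
chain condition. -/
def IsNoetherLattice (L : Type*) [CompleteLattice L] [CommMonoid L] : Prop :=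
  IsModularLattice L ∧ (∀ a : L, a = sSup {e : L | IsPrincipalElem e ∧ e ≤ a}) ∧
  WellFoundedGT L

/-- A maximal element: proper, and `m < x ≤ 1` implies `x = 1`. -/
def IsMaximalElem (m : L) : Prop :=
  m < 1 ∧ ∀ x : L, m < x → x ≤ 1 → x = 1

/-!
Suppose `p` is `φₙ`-`δ`-primary for all `n ≥ 2` and `a * b ≤ p` with `a ≰ p`, `b ≰ δ p`.
Then `a * b ≤ p²`, and applying the `φ₃` condition to `(a ⊔ p) * (b ⊔ p) ≤ p` gives
`p² ≤ p³ ≤ p² * m`. By Nakayama's lemma (for finite joins of principal elements, which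
generate `p²` by the ascending chain condition) `p² = ⊥`, so `a * b = ⊥`, and in a domain
`a = ⊥` or `b = ⊥`, contradicting the choice of `a` and `b`.
-/

open Quantale

theorem IsCGMultLattice.isQuantale (hL : IsCGMultLattice L) : IsQuantale L where
  mul_sSup_distrib := hL.1
  sSup_mul_distrib s y := by simpa only [mul_comm] using hL.1 y s

theorem IsCoatom.isMaximalElem (h1 : (1 : L) = ⊤) {c : L} (hc : IsCoatom c) :
    IsMaximalElem c :=
  ⟨h1 ▸ hc.lt_top, fun x hcx _ => h1 ▸ hc.2 x hcx⟩

theorem le_of_lt_one_of_maximalElem_unique [WellFoundedGT L] (h1 : (1 : L) = ⊤) {m : L}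
    (hmu : ∀ m' : L, IsMaximalElem m' → m' = m) {x : L} (hx : x < 1) : x ≤ m := by
  rcases IsCoatomic.eq_top_or_exists_le_coatom x with hxtop | ⟨c, hc, hxc⟩
  · exact absurd (h1 ▸ hxtop) hx.ne
  · exact hmu c (hc.isMaximalElem h1) ▸ hxc

section Nakayama

variable [IsQuantale L] {m : L}

theorem lres_mul_le (a b : L) : lres a b * b ≤ a :=
  leftMulResiduation_le_iff_mul_le.mp le_rfl

theorem IsPrincipalElem.le_of_le_mul_sup (h1 : (1 : L) = ⊤) {e c : L} (he : IsPrincipalElem e)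
    (hm : m < 1) (hloc : ∀ x : L, x < 1 → x ≤ m) (h : e ≤ m * e ⊔ c) : e ≤ c := by
  have hres : lres c e ⊔ m = ⊤ := by
    rw [← (he m c).2]
    exact top_unique (h1 ▸ le_sSup (show (1 : L) * e ≤ m * e ⊔ c by rwa [one_mul]))
  have hres_top : lres c e = ⊤ := by
    by_contra hne
    have hle : lres c e ⊔ m ≤ m := sup_le (hloc _ (h1 ▸ lt_top_iff_ne_top.mpr hne)) le_rfl
    exact hm.ne (h1 ▸ top_unique (hres ▸ hle))
  simpa only [hres_top, ← h1, one_mul] using lres_mul_le c e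

theorem finset_sup_eq_bot_of_le_mul (h1 : (1 : L) = ⊤) (hm : m < 1)
    (hloc : ∀ x : L, x < 1 → x ≤ m) (t : Finset L) (ht : ∀ e ∈ t, IsPrincipalElem e)
    (hle : t.sup id ≤ t.sup id * m) : t.sup id = ⊥ := by
  classical
  induction t using Finset.induction_on with
  | empty => rfl
  | @insert e s _ ih =>
    rw [Finset.sup_insert, id] at hle ⊢
    set b := s.sup id
    have he : e ≤ m * e ⊔ b * m :=
      le_sup_left.trans (hle.trans_eq (by rw [sup_mul_distrib, mul_comm e]))
    have heb : e ≤ b := ((ht e (Finset.mem_insert_self e s)).le_of_le_mul_sup h1 hm hloc he).trans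
      (mul_le_of_le_one_right' (h1 ▸ le_top))
    rw [sup_eq_right.mpr heb] at hle ⊢
    exact ih (fun f hf => ht f (Finset.mem_insert_of_mem hf)) hle

theorem IsNoetherLattice.eq_bot_of_le_mul (hN : IsNoetherLattice L) (h1 : (1 : L) = ⊤)
    (hm : m < 1) (hloc : ∀ x : L, x < 1 → x ≤ m) {a : L} (ha : a ≤ a * m) : a = ⊥ := by
  have : WellFoundedGT L := hN.2.2
  obtain ⟨t, ht, hat⟩ := WellFoundedGT.isSupFiniteCompact L {e : L | IsPrincipalElem e ∧ e ≤ a}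
  rw [← hN.2.1 a] at hat
  subst hat
  exact finset_sup_eq_bot_of_le_mul h1 hm hloc t (fun e he => (ht he).1) ha

end Nakayama

section Primary

variable {φ δ : L → L} {p a b : L}

theorem IsDeltaPrimary.isPhiDeltaPrimary (h : IsDeltaPrimary δ p) : IsPhiDeltaPrimary φ δ p :=
  ⟨h.1, fun a b hab _ => h.2 a b hab⟩

theorem IsPhiDeltaPrimary.mul_le_phi (h : IsPhiDeltaPrimary φ δ p) (hab : a * b ≤ p)
    (ha : ¬a ≤ p) (hb : ¬b ≤ δ p) : a * b ≤ φ p := by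
  by_contra hφ
  exact (h.2 a b hab hφ).elim ha hb

theorem IsPhiDeltaPrimary.mul_self_le_phi [IsQuantale L] (h1 : (1 : L) = ⊤)
    (h : IsPhiDeltaPrimary φ δ p) (hab : a * b ≤ p) (ha : ¬a ≤ p) (hb : ¬b ≤ δ p) :
    p * p ≤ φ p := by
  have hp_mul : ∀ x : L, p * x ≤ p := fun x => mul_le_of_le_one_right' (h1 ▸ le_top)
  have hsup : (a ⊔ p) * (b ⊔ p) ≤ p := by
    rw [sup_mul_distrib, mul_sup_distrib, mul_sup_distrib, mul_comm a p]
    exact sup_le (sup_le hab (hp_mul a)) (sup_le (hp_mul b) (hp_mul p))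
  calc p * p ≤ (a ⊔ p) * (b ⊔ p) := mul_le_mul' le_sup_right le_sup_right
    _ ≤ φ p := h.mul_le_phi hsup (fun h' => ha (le_sup_left.trans h'))
      (fun h' => hb (le_sup_left.trans h'))

end Primary

theorem local_noetherian_domain_phiN_iff_delta_general (hL : IsCGMultLattice L)
    (hN : IsNoetherLattice L) (m : L) (hm : IsMaximalElem m)
    (hmu : ∀ m' : L, IsMaximalElem m' → m' = m)
    (hdom : ∀ a b : L, a * b = ⊥ → a = ⊥ ∨ b = ⊥)
    (δ : L → L) (p : L) (hp : p < 1) :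
    (∀ n : ℕ, 2 ≤ n → IsPhiDeltaPrimary (fun a : L => a ^ n) δ p) ↔
      IsDeltaPrimary δ p := by
  have := hL.isQuantale
  have : WellFoundedGT L := hN.2.2
  have h1 : (1 : L) = ⊤ := hL.2.1
  have hloc : ∀ x : L, x < 1 → x ≤ m := fun x => le_of_lt_one_of_maximalElem_unique h1 hmu
  refine ⟨fun h => ⟨hp, fun a b hab => ?_⟩, fun h n _ => h.isPhiDeltaPrimary⟩
  by_contra! ⟨ha, hb⟩
  have hab_sq : a * b ≤ p ^ 2 := (h 2 le_rfl).mul_le_phi hab ha hb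
  have hsq_le : p ^ 2 ≤ p ^ 2 * m :=
    calc p ^ 2 = p * p := sq p
      _ ≤ p ^ 3 := (h 3 (by norm_num)).mul_self_le_phi h1 hab ha hb
      _ = p ^ 2 * p := pow_succ p 2
      _ ≤ p ^ 2 * m := mul_le_mul' le_rfl (hloc p hp)
  have hsq : p ^ 2 = ⊥ := hN.eq_bot_of_le_mul h1 hm.1 hloc hsq_le
  rcases hdom a b (le_bot_iff.mp (hsq ▸ hab_sq)) with rfl | rfl
  · exact ha bot_le
  · exact hb bot_le

theorem local_noetherian_domain_phiN_iff_delta (hL : IsCGMultLattice L)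
    (hN : IsNoetherLattice L) (m : L) (hm : IsMaximalElem m)
    (hmu : ∀ m' : L, IsMaximalElem m' → m' = m)
    (hdom : ∀ a b : L, a * b = ⊥ → a = ⊥ ∨ b = ⊥)
    (δ : L → L) (hδ : IsExpansion δ) (p : L) (hp : p < 1) :
    (∀ n : ℕ, 2 ≤ n → IsPhiDeltaPrimary (fun a : L => a ^ n) δ p) ↔
      IsDeltaPrimary δ p :=
  local_noetherian_domain_phiN_iff_delta_general hL hN m hm hmu hdom δ p hp
end

section
/- Let δ be an expansion function on L and φ : L → L a function with φ(a) ≤ a for all a ∈ L. Let q ∈ L be a φ-δ-primary element. If φ(q) is a δ-primary element of L, then q is δ-primary. -/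
open CompleteLattice

variable {L : Type*} [CompleteLattice L] [CommMonoid L]

theorem phi_of_q_deltaPrimary_implies_deltaPrimary_general
    (δ φ : L → L) (hδ : IsExpansion δ) (hφ : ∀ a : L, φ a ≤ a)
    (q : L) (hq : IsPhiDeltaPrimary φ δ q) (hφq : IsDeltaPrimary δ (φ q)) :
    IsDeltaPrimary δ q := by
  refine ⟨hq.1, fun a b hab => ?_⟩
  by_cases hφab : a * b ≤ φ q
  · exact (hφq.2 a b hφab).imp (·.trans (hφ q)) (·.trans (hδ.2 _ _ (hφ q)))
  · exact hq.2 a b hab hφab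

theorem phi_of_q_deltaPrimary_implies_deltaPrimary (hL : IsCGMultLattice L)
    (δ φ : L → L) (hδ : IsExpansion δ) (hφ : ∀ a : L, φ a ≤ a)
    (q : L) (hq : IsPhiDeltaPrimary φ δ q) (hφq : IsDeltaPrimary δ (φ q)) :
    IsDeltaPrimary δ q :=
  phi_of_q_deltaPrimary_implies_deltaPrimary_general δ φ hδ hφ q hq hφq
end
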